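/- For any s ≤ 0 and m ≤ 0, the function F(P_{T|X}, Q_{T,Y}, Q_A) is jointly convex in its three arguments, i.e., jointly convex over the product of the convex set of conditional pmfs P_{T|X}, the simplex of pmfs Q_{T,Y} on 𝒯 × 𝒴, and the simplex of pmfs Q_A on 𝒜. -/

import Mathlib

/-!
With the conventions `0 log (0 / q) = 0` and `p log (p / 0) = ∞`, the Kullback–Leibler summand
`p log₂ (p / q)` is positively homogeneous and subadditive in `(p, q)` (subadditivity is the
two-term log-sum inequality, i.e. convexity of the perspective of `x log x`), hence
`kl (a p₁ + b p₂) (a q₁ + b q₂) ≤ a kl p₁ q₁ + b kl p₂ q₂` for all `a, b ≥ 0`. The marginals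
`P_{Y,A}`, `P_{Y,T|X}` and `P_{X,Y,T}` are linear in `P_{T|X}`, so the two divergence terms of `F`
inherit this inequality through nonnegative sums and scalings, and the other terms are linear.
-/

open Finset

noncomputable section

/-- A probability mass function on a finite alphabet. -/
def IsPMF {α : Type} [Fintype α] (p : α → ℝ) : Prop :=
  (∀ a, 0 ≤ p a) ∧ ∑ a, p a = 1

/-- A conditional probability mass function. -/
def IsCondPMF {α β : Type} [Fintype α] [Fintype β] (p : α → β → ℝ) : Prop :=
  ∀ a, IsPMF (p a)

/-- A Shannon strategy: an estimate function `Y → Xh` together with an action in `A`. -/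
abbrev Strat (Y Xh A : Type) : Type := (Y → Xh) × A

variable {X Y A Xh : Type} [Fintype X] [Fintype Y] [Fintype A] [Fintype Xh]
  [DecidableEq X] [DecidableEq Y] [DecidableEq A] [DecidableEq Xh]


/-- Joint pmf `P_{X,Y,T}(x,y,t) = P_X(x) P_{T|X}(t|x) P_{Y|X,A}(y|x,a(t))`. -/
def pXYT (PX : X → ℝ) (PW : A → X → Y → ℝ) (PT : X → Strat Y Xh A → ℝ)
    (x : X) (y : Y) (t : Strat Y Xh A) : ℝ :=
  PX x * PT x t * PW t.2 x y

/-- Action marginal `P_A`. -/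
def pA (PX : X → ℝ) (PT : X → Strat Y Xh A → ℝ) (a : A) : ℝ :=
  ∑ x, ∑ t, if t.2 = a then PX x * PT x t else 0

/-- Marginal `P_{X,A}`. -/
def pXA (PX : X → ℝ) (PT : X → Strat Y Xh A → ℝ) (x : X) (a : A) : ℝ :=
  ∑ t, if t.2 = a then PX x * PT x t else 0

/-- Marginal `P_{Y,A}`. -/
def pYA (PX : X → ℝ) (PW : A → X → Y → ℝ) (PT : X → Strat Y Xh A → ℝ)
    (y : Y) (a : A) : ℝ :=
  ∑ x, ∑ t, if t.2 = a then pXYT PX PW PT x y t else 0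

/-- Marginal `P_{X,Y,A}`. -/
def pXYA (PX : X → ℝ) (PW : A → X → Y → ℝ) (PT : X → Strat Y Xh A → ℝ)
    (x : X) (y : Y) (a : A) : ℝ :=
  ∑ t, if t.2 = a then pXYT PX PW PT x y t else 0

/-- Marginal `P_{Y,T}`. -/
def pYT (PX : X → ℝ) (PW : A → X → Y → ℝ) (PT : X → Strat Y Xh A → ℝ)
    (y : Y) (t : Strat Y Xh A) : ℝ :=
  ∑ x, pXYT PX PW PT x y t

/-- Mutual information `I(X; a(T))` (base-2 logarithms). -/
def IXA (PX : X → ℝ) (PT : X → Strat Y Xh A → ℝ) : ℝ :=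
  ∑ x, ∑ a, pXA PX PT x a * Real.logb 2 (pXA PX PT x a / (PX x * pA PX PT a))

/-- Conditional mutual information `I(X; T | Y, a(T))` (base-2 logarithms). -/
def IXTcondYA (PX : X → ℝ) (PW : A → X → Y → ℝ) (PT : X → Strat Y Xh A → ℝ) : ℝ :=
  ∑ x, ∑ y, ∑ t, pXYT PX PW PT x y t *
    Real.logb 2 (pXYT PX PW PT x y t * pYA PX PW PT y t.2 /
      (pXYA PX PW PT x y t.2 * pYT PX PW PT y t))

/-- Average distortion `E[d(X, T(Y))]`. -/
def expDist (PX : X → ℝ) (PW : A → X → Y → ℝ) (dist : X → Xh → ℝ)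
    (PT : X → Strat Y Xh A → ℝ) : ℝ :=
  ∑ x, ∑ y, ∑ t, pXYT PX PW PT x y t * dist x (t.1 y)

/-- Average action cost `E[Δ(a(T))]`. -/
def expCost (PX : X → ℝ) (cost : A → ℝ) (PT : X → Strat Y Xh A → ℝ) : ℝ :=
  ∑ x, ∑ t, PX x * PT x t * cost t.2

/-- The rate-distortion-cost function in the Shannon-strategy formulation. -/
def RDC (PX : X → ℝ) (PW : A → X → Y → ℝ) (dist : X → Xh → ℝ) (cost : A → ℝ)
    (D C : ℝ) : ℝ :=
  sInf { r : ℝ | ∃ PT : X → Strat Y Xh A → ℝ, IsCondPMF PT ∧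
    expDist PX PW dist PT ≤ D ∧ expCost PX cost PT ≤ C ∧
    r = IXA PX PT + IXTcondYA PX PW PT }
/-- A single Kullback–Leibler summand `p log₂(p/q)` with the conventions
`0 · log(0/q) = 0` and `p log(p/0) = +∞` for `p > 0`, valued in the extended reals. -/
def klTerm (p q : ℝ) : EReal :=
  if p = 0 then 0 else if q = 0 then ⊤ else ((p * Real.logb 2 (p / q) : ℝ) : EReal)

/-- Conditional joint pmf `P_{Y,T|X}(y,t|x) = P_{T|X}(t|x) P_{Y|X,A}(y|x,a(t))`. -/
def pYTgivenX (PW : A → X → Y → ℝ) (PT : X → Strat Y Xh A → ℝ)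
    (x : X) (y : Y) (t : Strat Y Xh A) : ℝ :=
  PT x t * PW t.2 x y

/-- The Blahut–Arimoto functional
`F(P_{T|X}, Q_{T,Y}, Q_A) = D_KL(P_{Y,A}‖Q_A) − Σ P_{X,Y,T} log₂ P_{Y|X,A}`
`+ Σ_x P_X(x) D_KL(P_{Y,T|X}(·,·|x)‖Q_{T,Y}) − s E[d(X,T(Y))] − m E[Δ(a(T))]`,
valued in the extended reals (base-2 logarithms). -/
def Ffun (PX : X → ℝ) (PW : A → X → Y → ℝ) (dist : X → Xh → ℝ) (cost : A → ℝ)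
    (s m : ℝ) (PT : X → Strat Y Xh A → ℝ) (QTY : Strat Y Xh A × Y → ℝ)
    (QA : A → ℝ) : EReal :=
  (∑ y, ∑ a, klTerm (pYA PX PW PT y a) (QA a))
  + (((- ∑ x, ∑ y, ∑ t, pXYT PX PW PT x y t * Real.logb 2 (PW t.2 x y) : ℝ)) : EReal)
  + (∑ x, ((PX x : ℝ) : EReal) * ∑ t, ∑ y, klTerm (pYTgivenX PW PT x y t) (QTY (t, y)))
  + ((- s * expDist PX PW dist PT - m * expCost PX cost PT : ℝ) : EReal)

end

namespace EReal

variable {a b c : ℝ}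

theorem coe_mul_sum (hc : 0 ≤ c) {ι : Type*} (s : Finset ι) (f : ι → EReal) :
    (c : EReal) * ∑ i ∈ s, f i = ∑ i ∈ s, (c : EReal) * f i :=
  map_sum (⟨⟨fun x => (c : EReal) * x, mul_zero _⟩,
    left_distrib_of_nonneg_of_ne_top (EReal.coe_nonneg.2 hc) (coe_ne_top c)⟩ : EReal →+ EReal) f s

theorem add_le_coe_mul_add (ha : 0 ≤ a) (hb : 0 ≤ b) {u v u₁ u₂ v₁ v₂ : EReal}
    (hu : u ≤ a * u₁ + b * u₂) (hv : v ≤ a * v₁ + b * v₂) :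
    u + v ≤ a * (u₁ + v₁) + b * (u₂ + v₂) := by
  rw [left_distrib_of_nonneg_of_ne_top (EReal.coe_nonneg.2 ha) (coe_ne_top a),
    left_distrib_of_nonneg_of_ne_top (EReal.coe_nonneg.2 hb) (coe_ne_top b), add_add_add_comm]
  exact add_le_add hu hv

theorem sum_le_coe_mul_sum_add (ha : 0 ≤ a) (hb : 0 ≤ b) {ι : Type*} (s : Finset ι)
    {f g h : ι → EReal} (hf : ∀ i ∈ s, f i ≤ a * g i + b * h i) :
    ∑ i ∈ s, f i ≤ a * ∑ i ∈ s, g i + b * ∑ i ∈ s, h i := by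
  rw [coe_mul_sum ha, coe_mul_sum hb, ← Finset.sum_add_distrib]
  exact Finset.sum_le_sum hf

theorem coe_mul_le_coe_mul_add (hc : 0 ≤ c) {u u₁ u₂ : EReal}
    (hu : u ≤ a * u₁ + b * u₂) : c * u ≤ a * (c * u₁) + b * (c * u₂) := by
  calc (c : EReal) * u ≤ c * (a * u₁ + b * u₂) :=
        mul_le_mul_of_nonneg_left hu (EReal.coe_nonneg.2 hc)
    _ = a * (c * u₁) + b * (c * u₂) := by
      rw [left_distrib_of_nonneg_of_ne_top (EReal.coe_nonneg.2 hc) (coe_ne_top c),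
        mul_left_comm, mul_left_comm (c : EReal)]

theorem coe_le_coe_mul_add_of_eq {r r₁ r₂ : ℝ} (h : r = a * r₁ + b * r₂) :
    (r : EReal) ≤ a * r₁ + b * r₂ := by
  exact_mod_cast h.le

end EReal

theorem Real.add_mul_logb_div_add_le {p p' q q' : ℝ} (hp : 0 ≤ p) (hp' : 0 ≤ p')
    (hq : 0 < q) (hq' : 0 < q') :
    (p + p') * logb 2 ((p + p') / (q + q')) ≤ p * logb 2 (p / q) + p' * logb 2 (p' / q') := by
  have hS : 0 < q + q' := add_pos hq hq'
  set S := q + q'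
  have hconv := convexOn_mul_log.2 (Set.mem_Ici.2 (div_nonneg hp hq.le))
    (Set.mem_Ici.2 (div_nonneg hp' hq'.le)) (div_nonneg hq.le hS.le) (div_nonneg hq'.le hS.le)
    (by rw [← add_div, div_self hS.ne'])
  have hmix : q / S * (p / q) + q' / S * (p' / q') = (p + p') / S := by field_simp
  simp only [smul_eq_mul, hmix] at hconv
  have hlog : (p + p') * log ((p + p') / S) ≤ p * log (p / q) + p' * log (p' / q') :=
    calc (p + p') * log ((p + p') / S) = S * ((p + p') / S * log ((p + p') / S)) := by
          field_simp
      _ ≤ S * (q / S * (p / q * log (p / q)) + q' / S * (p' / q' * log (p' / q'))) := by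
          gcongr
      _ = p * log (p / q) + p' * log (p' / q') := by field_simp
  simp only [logb, ← mul_div_assoc, ← add_div]
  exact div_le_div_of_nonneg_right hlog (log_pos one_lt_two).le

theorem klTerm_ne_bot (p q : ℝ) : klTerm p q ≠ ⊥ := by
  unfold klTerm; split_ifs
  exacts [EReal.zero_ne_bot, top_ne_bot, EReal.coe_ne_bot _]

theorem klTerm_of_pos {q : ℝ} (p : ℝ) (hq : 0 < q) :
    klTerm p q = ((p * Real.logb 2 (p / q) : ℝ) : EReal) := by
  unfold klTerm; split_ifs with hp <;> simp_all [hq.ne']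

theorem klTerm_mul {c : ℝ} (hc : 0 ≤ c) (p q : ℝ) : klTerm (c * p) (c * q) = c * klTerm p q := by
  rcases hc.eq_or_lt with rfl | hc
  · simp [klTerm]
  unfold klTerm
  simp only [mul_eq_zero, hc.ne', false_or, mul_div_mul_left _ _ hc.ne']
  split_ifs
  · simp
  · exact (EReal.coe_mul_top_of_pos hc).symm
  · rw [← EReal.coe_mul, mul_assoc]

theorem klTerm_add_le {p p' q q' : ℝ} (hp : 0 ≤ p) (hp' : 0 ≤ p') (hq : 0 ≤ q) (hq' : 0 ≤ q') :
    klTerm (p + p') (q + q') ≤ klTerm p q + klTerm p' q' := by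
  rcases hq.eq_or_lt with rfl | hq
  · by_cases hp0 : p = 0
    · simp [hp0, klTerm]
    · rw [show klTerm p 0 = ⊤ by simp [klTerm, hp0], EReal.top_add_of_ne_bot (klTerm_ne_bot _ _)]
      exact le_top
  rcases hq'.eq_or_lt with rfl | hq'
  · by_cases hp0 : p' = 0
    · simp [hp0, klTerm]
    · rw [show klTerm p' 0 = ⊤ by simp [klTerm, hp0], EReal.add_top_of_ne_bot (klTerm_ne_bot _ _)]
      exact le_top
  rw [klTerm_of_pos _ hq, klTerm_of_pos _ hq', klTerm_of_pos _ (add_pos hq hq'), ← EReal.coe_add,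
    EReal.coe_le_coe_iff]
  exact Real.add_mul_logb_div_add_le hp hp' hq hq'

theorem klTerm_mix {a b p₁ p₂ q₁ q₂ : ℝ} (ha : 0 ≤ a) (hb : 0 ≤ b) (hp₁ : 0 ≤ p₁)
    (hp₂ : 0 ≤ p₂) (hq₁ : 0 ≤ q₁) (hq₂ : 0 ≤ q₂) :
    klTerm (a * p₁ + b * p₂) (a * q₁ + b * q₂) ≤ a * klTerm p₁ q₁ + b * klTerm p₂ q₂ := by
  rw [← klTerm_mul ha, ← klTerm_mul hb]
  exact klTerm_add_le (by positivity) (by positivity) (by positivity) (by positivity)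

section Mixture

variable {X Y A Xh : Type} {PX : X → ℝ} {PW : A → X → Y → ℝ}
  {PT PT₁ PT₂ : X → Strat Y Xh A → ℝ} {a b : ℝ}

theorem pXYT_mix (x : X) (y : Y) (t : Strat Y Xh A) :
    pXYT PX PW (a • PT₁ + b • PT₂) x y t
      = a * pXYT PX PW PT₁ x y t + b * pXYT PX PW PT₂ x y t := by
  simp only [pXYT, Pi.add_apply, Pi.smul_apply, smul_eq_mul]
  ring

theorem pYTgivenX_mix (x : X) (y : Y) (t : Strat Y Xh A) :
    pYTgivenX PW (a • PT₁ + b • PT₂) x y t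
      = a * pYTgivenX PW PT₁ x y t + b * pYTgivenX PW PT₂ x y t := by
  simp only [pYTgivenX, Pi.add_apply, Pi.smul_apply, smul_eq_mul]
  ring

variable [Fintype X] [Fintype Y] [Fintype A] [Fintype Xh] [DecidableEq Y]

theorem pYA_mix [DecidableEq A] (y : Y) (c : A) :
    pYA PX PW (a • PT₁ + b • PT₂) y c = a * pYA PX PW PT₁ y c + b * pYA PX PW PT₂ y c := by
  simp only [pYA, pXYT_mix, Finset.mul_sum, ← Finset.sum_add_distrib]
  refine Finset.sum_congr rfl fun x _ => Finset.sum_congr rfl fun t _ => ?_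
  split_ifs <;> ring

theorem pYA_nonneg [DecidableEq A] (hPX : ∀ x, 0 ≤ PX x) (hPW : ∀ c x y, 0 ≤ PW c x y)
    (hPT : ∀ x t, 0 ≤ PT x t) (y : Y) (c : A) : 0 ≤ pYA PX PW PT y c :=
  Finset.sum_nonneg fun x _ => Finset.sum_nonneg fun t _ => by
    split_ifs
    exacts [mul_nonneg (mul_nonneg (hPX x) (hPT x t)) (hPW t.2 x y), le_rfl]

theorem sum_pXYT_mul_mix (g : X → Y → Strat Y Xh A → ℝ) :
    ∑ x, ∑ y, ∑ t, pXYT PX PW (a • PT₁ + b • PT₂) x y t * g x y t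
      = a * ∑ x, ∑ y, ∑ t, pXYT PX PW PT₁ x y t * g x y t
        + b * ∑ x, ∑ y, ∑ t, pXYT PX PW PT₂ x y t * g x y t := by
  simp only [pXYT_mix, add_mul, mul_assoc, Finset.sum_add_distrib, Finset.mul_sum]

theorem expDist_mix (dist : X → Xh → ℝ) :
    expDist PX PW dist (a • PT₁ + b • PT₂)
      = a * expDist PX PW dist PT₁ + b * expDist PX PW dist PT₂ :=
  sum_pXYT_mul_mix _

theorem expCost_mix (cost : A → ℝ) :
    expCost PX cost (a • PT₁ + b • PT₂) = a * expCost PX cost PT₁ + b * expCost PX cost PT₂ := by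
  simp only [expCost, Finset.mul_sum, ← Finset.sum_add_distrib]
  refine Finset.sum_congr rfl fun x _ => Finset.sum_congr rfl fun t _ => ?_
  simp only [Pi.add_apply, Pi.smul_apply, smul_eq_mul]
  ring

end Mixture

theorem Ffun_jointly_convex_general
    {X Y A Xh : Type} [Fintype X] [Fintype Y] [Fintype A] [Fintype Xh]
    [DecidableEq Y] [DecidableEq A]
    (PX : X → ℝ) (PW : A → X → Y → ℝ) (dist : X → Xh → ℝ) (cost : A → ℝ)
    (hPX : IsPMF PX)
    (hPW : ∀ a x, IsPMF (PW a x))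
    (s m : ℝ) :
    ∀ z₁ z₂ : (X → Strat Y Xh A → ℝ) × ((Strat Y Xh A × Y) → ℝ) × (A → ℝ),
      IsCondPMF z₁.1 → IsPMF z₁.2.1 → IsPMF z₁.2.2 →
      IsCondPMF z₂.1 → IsPMF z₂.2.1 → IsPMF z₂.2.2 →
      ∀ a b : ℝ, 0 ≤ a → 0 ≤ b → a + b = 1 →
        Ffun PX PW dist cost s m (a • z₁ + b • z₂).1 (a • z₁ + b • z₂).2.1
            (a • z₁ + b • z₂).2.2 ≤
          ((a : ℝ) : EReal) * Ffun PX PW dist cost s m z₁.1 z₁.2.1 z₁.2.2 +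
          ((b : ℝ) : EReal) * Ffun PX PW dist cost s m z₂.1 z₂.2.1 z₂.2.2 := by
  rintro ⟨PT₁, QTY₁, QA₁⟩ ⟨PT₂, QTY₂, QA₂⟩ hPT₁ hQTY₁ hQA₁ hPT₂ hQTY₂ hQA₂ a b ha hb -
  have hPW₀ (c : A) (x : X) : ∀ y, 0 ≤ PW c x y := (hPW c x).1
  have hPT₁₀ (x : X) : ∀ t, 0 ≤ PT₁ x t := (hPT₁ x).1
  have hPT₂₀ (x : X) : ∀ t, 0 ≤ PT₂ x t := (hPT₂ x).1
  simp only [Prod.smul_mk, Prod.mk_add_mk]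
  refine EReal.add_le_coe_mul_add ha hb
    (EReal.add_le_coe_mul_add ha hb (EReal.add_le_coe_mul_add ha hb ?_ ?_) ?_) ?_
  · refine EReal.sum_le_coe_mul_sum_add ha hb _ fun y _ ↦
      EReal.sum_le_coe_mul_sum_add ha hb _ fun c _ ↦ ?_
    rw [pYA_mix]
    exact klTerm_mix ha hb (pYA_nonneg hPX.1 hPW₀ hPT₁₀ y c) (pYA_nonneg hPX.1 hPW₀ hPT₂₀ y c)
      (hQA₁.1 c) (hQA₂.1 c)
  · exact EReal.coe_le_coe_mul_add_of_eq (by rw [sum_pXYT_mul_mix]; ring)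
  · refine EReal.sum_le_coe_mul_sum_add ha hb _ fun x _ ↦ EReal.coe_mul_le_coe_mul_add (hPX.1 x) <|
      EReal.sum_le_coe_mul_sum_add ha hb _ fun t _ ↦
        EReal.sum_le_coe_mul_sum_add ha hb _ fun y _ ↦ ?_
    rw [pYTgivenX_mix]
    exact klTerm_mix ha hb (mul_nonneg (hPT₁₀ x t) (hPW₀ t.2 x y))
      (mul_nonneg (hPT₂₀ x t) (hPW₀ t.2 x y)) (hQTY₁.1 (t, y)) (hQTY₂.1 (t, y))
  · exact EReal.coe_le_coe_mul_add_of_eq (by rw [expDist_mix, expCost_mix]; ring)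

/-- For any `s ≤ 0` and `m ≤ 0`, the functional
`F(P_{T|X}, Q_{T,Y}, Q_A)` is jointly convex over the product of the convex set of
conditional pmfs `P_{T|X}`, the simplex of pmfs `Q_{T,Y}` on `T × Y`, and the simplex of
pmfs `Q_A` on `A`. -/
theorem Ffun_jointly_convex
    {X Y A Xh : Type} [Fintype X] [Fintype Y] [Fintype A] [Fintype Xh]
    [DecidableEq X] [DecidableEq Y] [DecidableEq A] [DecidableEq Xh]
    [Nonempty X] [Nonempty Y] [Nonempty A] [Nonempty Xh]
    (PX : X → ℝ) (PW : A → X → Y → ℝ) (dist : X → Xh → ℝ) (cost : A → ℝ)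
    (hPX : IsPMF PX) (hPXpos : ∀ x, 0 < PX x)
    (hPW : ∀ a x, IsPMF (PW a x))
    (hdist : ∀ x xh, 0 ≤ dist x xh) (hdist0 : ∀ x, ∃ xh, dist x xh = 0)
    (hcost : ∀ a, 0 ≤ cost a) (hcost0 : ∃ a, cost a = 0)
    (s m : ℝ) (hs : s ≤ 0) (hm : m ≤ 0) :
    ∀ z₁ z₂ : (X → Strat Y Xh A → ℝ) × ((Strat Y Xh A × Y) → ℝ) × (A → ℝ),
      IsCondPMF z₁.1 → IsPMF z₁.2.1 → IsPMF z₁.2.2 →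
      IsCondPMF z₂.1 → IsPMF z₂.2.1 → IsPMF z₂.2.2 →
      ∀ a b : ℝ, 0 ≤ a → 0 ≤ b → a + b = 1 →
        Ffun PX PW dist cost s m (a • z₁ + b • z₂).1 (a • z₁ + b • z₂).2.1
            (a • z₁ + b • z₂).2.2 ≤
          ((a : ℝ) : EReal) * Ffun PX PW dist cost s m z₁.1 z₁.2.1 z₁.2.2 +
          ((b : ℝ) : EReal) * Ffun PX PW dist cost s m z₂.1 z₂.2.1 z₂.2.2 :=
  Ffun_jointly_convex_general PX PW dist cost hPX hPW s m
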